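/- Let $n \ge 1$ and $1 \le p < q < \infty$, and let $f(x) = \chi_{(0,1)}(|x|) \, |x|^{-n/q}$ for $x \in \mathbb{R}^n \setminus \{0\}$. Then $f$ belongs to the small Morrey space $m^p_q(\mathbb{R}^n)$ and $\|f\|_{m^p_q} = |B(0,1)|^{1/q} (1 - p/q)^{-1/p}$, where $|B(0,1)|$ is the Lebesgue measure of the unit ball in $\mathbb{R}^n$. -/

import Mathlib

open MeasureTheory

/-- The set of candidate values whose supremum defines the small Morrey norm of `f`
on `ℝⁿ`: `|B(a,r)|^(1/q-1/p) (∫_{B(a,r)} |f|^p)^(1/p)` over all centers `a` and radii `r ∈ (0,1)`. -/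
def smallMorreySet (n : ℕ) (p q : ℝ) (f : EuclideanSpace ℝ (Fin n) → ℝ) : Set ℝ :=
  {v : ℝ | ∃ (a : EuclideanSpace ℝ (Fin n)) (r : ℝ), 0 < r ∧ r < 1 ∧
    v = (volume (Metric.ball a r)).toReal ^ (1 / q - 1 / p) *
        (∫ x in Metric.ball a r, |f x| ^ p) ^ (1 / p)}

/-- The small Morrey norm `‖f‖_{m^p_q}`. -/
noncomputable def smallMorreyNorm (n : ℕ) (p q : ℝ) (f : EuclideanSpace ℝ (Fin n) → ℝ) : ℝ :=
  sSup (smallMorreySet n p q f)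

/-- `f` belongs to the small Morrey space `m^p_q(ℝⁿ)`: it is measurable and its small Morrey
norm is finite (i.e. the defining supremum is over a bounded set). -/
def MemSmallMorrey (n : ℕ) (p q : ℝ) (f : EuclideanSpace ℝ (Fin n) → ℝ) : Prop :=
  Measurable f ∧ BddAbove (smallMorreySet n p q f)

open Metric Set
open scoped ENNReal

lemma polar_lint (n : ℕ) (hn : 1 ≤ n) (G : ℝ → ℝ≥0∞) (hG : Measurable G) :
    ∫⁻ x : EuclideanSpace ℝ (Fin n), G ‖x‖ =
      (n : ℝ≥0∞) * volume (ball (0 : EuclideanSpace ℝ (Fin n)) 1) *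
        ∫⁻ y in Ioi (0:ℝ), ENNReal.ofReal (y ^ (n - 1)) * G y := by
  haveI : Nonempty (Fin n) := ⟨⟨0, hn⟩⟩
  haveI : Nontrivial (EuclideanSpace ℝ (Fin n)) := inferInstance
  set E := EuclideanSpace ℝ (Fin n)
  have hdim : Module.finrank ℝ E = n := finrank_euclideanSpace_fin
  have hright : ∫⁻ y : Ioi (0:ℝ), G y ∂(Measure.volumeIoiPow (Module.finrank ℝ E - 1)) =
      ∫⁻ y in Ioi (0:ℝ), ENNReal.ofReal (y ^ (n - 1)) * G y := by
    rw [Measure.volumeIoiPow,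
      lintegral_withDensity_eq_lintegral_mul _
        ((measurable_subtype_coe.pow_const _).ennreal_ofReal)
        (show Measurable (fun y : Ioi (0:ℝ) => G ↑y) from hG.comp measurable_subtype_coe), hdim]
    simp only [Pi.mul_apply]
    exact lintegral_subtype_comap measurableSet_Ioi fun y => ENNReal.ofReal (y ^ (n-1)) * G y
  calc
    ∫⁻ x : E, G ‖x‖ = ∫⁻ x in ({0}ᶜ : Set E), G ‖x‖ := by
      rw [restrict_compl_singleton]
    _ = ∫⁻ x : ({0}ᶜ : Set E), G ‖x.1‖
          ∂((volume : Measure E).comap Subtype.val) :=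
      (lintegral_subtype_comap (measurableSet_singleton _).compl _).symm
    _ = ∫⁻ p : Metric.sphere (0:E) 1 × Ioi (0:ℝ), G p.2
          ∂((volume : Measure E).toSphere.prod
            (Measure.volumeIoiPow (Module.finrank ℝ E - 1))) :=
      Eq.trans (by congr 1; funext x; simp)
      ((Measure.measurePreserving_homeomorphUnitSphereProd volume).lintegral_comp_emb
        (Homeomorph.measurableEmbedding (homeomorphUnitSphereProd E)) (G ∘ Subtype.val ∘ Prod.snd))
    _ = (volume : Measure E).toSphere univ *
          ∫⁻ y : Ioi (0:ℝ), G y ∂(Measure.volumeIoiPow (Module.finrank ℝ E - 1)) := by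
      have := lintegral_prod_mul (μ := (volume : Measure E).toSphere)
        (ν := Measure.volumeIoiPow (Module.finrank ℝ E - 1))
        (f := fun _ : Metric.sphere (0:E) 1 => (1:ℝ≥0∞))
        (g := fun y : Ioi (0:ℝ) => G y) aemeasurable_const
        ((hG.comp measurable_subtype_coe).aemeasurable)
      simpa [lintegral_one] using this
    _ = (n : ℝ≥0∞) * volume (ball (0 : E) 1) *
          ∫⁻ y in Ioi (0:ℝ), ENNReal.ofReal (y ^ (n - 1)) * G y := by
      rw [hright, Measure.toSphere_apply_univ, hdim]

lemma ball_lint (n : ℕ) (hn : 1 ≤ n) (γ : ℝ) (hγ : 0 < γ) (hγn : γ < n) (r : ℝ)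
    (hr : 0 < r) (hr1 : r ≤ 1) :
    ∫⁻ x in ball (0 : EuclideanSpace ℝ (Fin n)) r,
        ENNReal.ofReal (if ‖x‖ < 1 then ‖x‖ ^ (-γ) else 0) =
      (n : ℝ≥0∞) * volume (ball (0 : EuclideanSpace ℝ (Fin n)) 1) *
        ENNReal.ofReal (r ^ ((n:ℝ) - γ) / ((n:ℝ) - γ)) := by
  set G : ℝ → ℝ≥0∞ := fun y => if y < r then ENNReal.ofReal (y ^ (-γ)) else 0 with hGdef
  have hG : Measurable G := by
    refine Measurable.ite (measurableSet_lt measurable_id measurable_const) ?_ measurable_const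
    exact (measurable_id.pow_const (-γ)).ennreal_ofReal
  have hβ : (-1 : ℝ) < (n:ℝ) - 1 + -γ := by
    have : γ < (n:ℝ) := hγn
    linarith
  have step1 : ∫⁻ x in ball (0 : EuclideanSpace ℝ (Fin n)) r,
      ENNReal.ofReal (if ‖x‖ < 1 then ‖x‖ ^ (-γ) else 0) =
      ∫⁻ x : EuclideanSpace ℝ (Fin n), G ‖x‖ := by
    rw [← lintegral_indicator measurableSet_ball _]
    refine lintegral_congr fun x => ?_
    by_cases h : ‖x‖ < r
    · rw [Set.indicator_of_mem (mem_ball_zero_iff.2 h), if_pos (lt_of_lt_of_le h hr1),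
        hGdef]
      simp [h]
    · rw [Set.indicator_of_notMem (fun hx => h (mem_ball_zero_iff.1 hx)), hGdef]
      simp [h]
  have step3 : ∫⁻ y in Ioi (0:ℝ), ENNReal.ofReal (y ^ (n - 1)) * G y =
      ENNReal.ofReal (r ^ ((n:ℝ) - γ) / ((n:ℝ) - γ)) := by
    have hind : ∀ y, ENNReal.ofReal (y ^ (n - 1)) * G y =
        (Iio r).indicator
          (fun y => ENNReal.ofReal (y ^ (n - 1)) * ENNReal.ofReal (y ^ (-γ))) y := by
      intro y
      by_cases h : y < r
      · simp [hGdef, h, Set.indicator_of_mem, Set.mem_Iio]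
      · simp [hGdef, h, Set.indicator_of_notMem, Set.mem_Iio]
    calc ∫⁻ y in Ioi (0:ℝ), ENNReal.ofReal (y ^ (n - 1)) * G y
        = ∫⁻ y in Iio r ∩ Ioi (0:ℝ),
            ENNReal.ofReal (y ^ (n - 1)) * ENNReal.ofReal (y ^ (-γ)) := by
          rw [lintegral_congr hind, lintegral_indicator measurableSet_Iio,
            Measure.restrict_restrict measurableSet_Iio]
      _ = ∫⁻ y in Ioo (0:ℝ) r, ENNReal.ofReal (y ^ ((n:ℝ) - 1 + -γ)) := by
          rw [Set.Iio_inter_Ioi]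
          refine setLIntegral_congr_fun measurableSet_Ioo ?_
          intro y hy
          beta_reduce
          rw [← ENNReal.ofReal_mul (pow_nonneg hy.1.le _)]
          congr 1
          rw [← Real.rpow_natCast y (n-1), ← Real.rpow_add hy.1]
          congr 2
          push_cast [Nat.cast_sub hn]
          ring
      _ = ENNReal.ofReal (∫ y in Ioo (0:ℝ) r, y ^ ((n:ℝ) - 1 + -γ)) := by
          refine (ofReal_integral_eq_lintegral_ofReal ?_ ?_).symm
          · exact ((intervalIntegral.intervalIntegrable_rpow' hβ).1).mono_set Set.Ioo_subset_Ioc_self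
          · filter_upwards [ae_restrict_mem measurableSet_Ioo] with y hy
            exact Real.rpow_nonneg hy.1.le _
      _ = ENNReal.ofReal (r ^ ((n:ℝ) - γ) / ((n:ℝ) - γ)) := by
          rw [Measure.restrict_congr_set Ioo_ae_eq_Ioc, ← intervalIntegral.integral_of_le hr.le,
            integral_rpow (Or.inl hβ)]
          rw [Real.zero_rpow (by linarith), sub_zero]
          norm_num
          ring_nf
  rw [step1, polar_lint n hn G hG, step3]

lemma bathtub (n : ℕ) (hn : 1 ≤ n) (γ : ℝ) (hγ : 0 < γ)
    (a : EuclideanSpace ℝ (Fin n)) (r : ℝ) (hr : 0 < r) (hr1 : r < 1) :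
    ∫⁻ x in ball a r, ENNReal.ofReal (if ‖x‖ < 1 then ‖x‖ ^ (-γ) else 0) ≤
      ∫⁻ x in ball (0 : EuclideanSpace ℝ (Fin n)) r,
        ENNReal.ofReal (if ‖x‖ < 1 then ‖x‖ ^ (-γ) else 0) := by
  haveI : Nonempty (Fin n) := ⟨⟨0, hn⟩⟩
  haveI : Nontrivial (EuclideanSpace ℝ (Fin n)) := inferInstance
  set H : EuclideanSpace ℝ (Fin n) → ℝ≥0∞ := fun x => ENNReal.ofReal (if ‖x‖ < 1 then ‖x‖ ^ (-γ) else 0) with hHdef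
  set A : Set (EuclideanSpace ℝ (Fin n)) := ball a r
  set B : Set (EuclideanSpace ℝ (Fin n)) := ball (0 : EuclideanSpace ℝ (Fin n)) r
  set m : ℝ≥0∞ := ENNReal.ofReal (r ^ (-γ)) with hmdef
  have hμ : volume A = volume B := by
    show volume (ball a r) = volume (ball (0:EuclideanSpace ℝ (Fin n)) r)
    rw [Measure.addHaar_ball (volume : Measure (EuclideanSpace ℝ (Fin n))) a hr.le,
      Measure.addHaar_ball (volume : Measure (EuclideanSpace ℝ (Fin n))) (0:EuclideanSpace ℝ (Fin n)) hr.le]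
  have hfin : volume (A ∩ B) ≠ ⊤ :=
    (lt_of_le_of_lt (measure_mono Set.inter_subset_left) measure_ball_lt_top).ne
  have hAB : volume (A \ B) = volume (B \ A) := by
    have h1 := measure_inter_add_diff (μ := (volume : Measure (EuclideanSpace ℝ (Fin n)))) A
      (measurableSet_ball (x := (0:EuclideanSpace ℝ (Fin n))) (ε := r))
    have h2 := measure_inter_add_diff (μ := (volume : Measure (EuclideanSpace ℝ (Fin n)))) B
      (measurableSet_ball (x := a) (ε := r))
    rw [Set.inter_comm B A] at h2
    have : volume (A ∩ B) + volume (A \ B) = volume (A ∩ B) + volume (B \ A) := by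
      rw [h1, h2, hμ]
    exact (ENNReal.add_right_inj hfin).1 this
  -- pointwise bounds
  have hub : ∀ x : EuclideanSpace ℝ (Fin n), x ∈ A \ B → H x ≤ m := by
    rintro x ⟨-, hxB⟩
    have hxr : r ≤ ‖x‖ := by
      by_contra h
      exact hxB (mem_ball_zero_iff.2 (lt_of_not_ge h))
    by_cases h1 : ‖x‖ < 1
    · rw [hHdef]
      simp only [if_pos h1]
      exact ENNReal.ofReal_le_ofReal
        (Real.rpow_le_rpow_of_nonpos hr hxr (neg_nonpos.2 hγ.le))
    · rw [hHdef]
      simp only [if_neg h1]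
      simp
  have hlb : ∀ x : EuclideanSpace ℝ (Fin n), x ∈ B \ A → x ≠ 0 → m ≤ H x := by
    rintro x ⟨hxB, -⟩ hx0
    have hx : ‖x‖ < r := mem_ball_zero_iff.1 hxB
    have hx1 : ‖x‖ < 1 := hx.trans hr1
    rw [hHdef]
    simp only [if_pos hx1]
    exact ENNReal.ofReal_le_ofReal
      (Real.rpow_le_rpow_of_nonpos (norm_pos_iff.2 hx0) hx.le (neg_nonpos.2 hγ.le))
  have hmeasAB : MeasurableSet (A \ B) := measurableSet_ball.diff measurableSet_ball
  have hmeasBA : MeasurableSet (B \ A) := measurableSet_ball.diff measurableSet_ball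
  have bound1 : ∫⁻ x in A \ B, H x ≤ m * volume (A \ B) := by
    calc ∫⁻ x in A \ B, H x ≤ ∫⁻ _ in A \ B, m := by
          refine lintegral_mono_ae ?_
          filter_upwards [ae_restrict_mem hmeasAB] with x hx
          exact hub x hx
      _ = m * volume (A \ B) := setLIntegral_const _ _
  have bound2 : m * volume (B \ A) ≤ ∫⁻ x in B \ A, H x := by
    have h0 : ∀ᵐ x : EuclideanSpace ℝ (Fin n) ∂volume, x ≠ 0 := by
      have := measure_singleton (0 : EuclideanSpace ℝ (Fin n)) (μ := (volume : Measure (EuclideanSpace ℝ (Fin n))))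
      rw [ae_iff]
      simpa using this
    calc m * volume (B \ A) = ∫⁻ _ in B \ A, m := (setLIntegral_const _ _).symm
      _ ≤ ∫⁻ x in B \ A, H x := by
          refine lintegral_mono_ae ?_
          filter_upwards [ae_restrict_mem hmeasBA, ae_restrict_of_ae h0] with x hx hx0
          exact hlb x hx hx0
  calc ∫⁻ x in A, H x = (∫⁻ x in A ∩ B, H x) + ∫⁻ x in A \ B, H x :=
        (lintegral_inter_add_diff H A measurableSet_ball).symm
    _ ≤ (∫⁻ x in A ∩ B, H x) + m * volume (A \ B) := add_le_add_right bound1 _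
    _ = (∫⁻ x in B ∩ A, H x) + m * volume (B \ A) := by rw [Set.inter_comm, hAB]
    _ ≤ (∫⁻ x in B ∩ A, H x) + ∫⁻ x in B \ A, H x := add_le_add_right bound2 _
    _ = ∫⁻ x in B, H x := lintegral_inter_add_diff H B measurableSet_ball


/-- `f(x) = χ_{(0,1)}(|x|) |x|^{-n/q}` belongs to the small Morrey space `m^p_q(ℝⁿ)` and its
small Morrey norm is `|B(0,1)|^{1/q} (1 - p/q)^{-1/p}`. -/
theorem smallMorreyNorm_truncated_rpow_neg (n : ℕ) (hn : 1 ≤ n)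
    (p q : ℝ) (hp : 1 ≤ p) (hpq : p < q)
    (f : EuclideanSpace ℝ (Fin n) → ℝ)
    (hf : ∀ x : EuclideanSpace ℝ (Fin n), x ≠ 0 →
      f x = if 0 < ‖x‖ ∧ ‖x‖ < 1 then ‖x‖ ^ (-((n : ℝ) / q)) else 0) :
    MemSmallMorrey n p q f ∧
    smallMorreyNorm n p q f =
      (volume (Metric.ball (0 : EuclideanSpace ℝ (Fin n)) 1)).toReal ^ (1 / q) *
        (1 - p / q) ^ (-(1 / p)) := by
  classical
  have hp0 : (0:ℝ) < p := lt_of_lt_of_le one_pos hp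
  have hq0 : (0:ℝ) < q := hp0.trans hpq
  have hn1 : (1:ℝ) ≤ (n:ℝ) := by exact_mod_cast hn
  have hn0 : (0:ℝ) < n := lt_of_lt_of_le one_pos hn1
  have hpq1 : p / q < 1 := (div_lt_one hq0).2 hpq
  have hs : 0 < 1 - p / q := by linarith
  set γ : ℝ := (n:ℝ)/q*p with hγdef
  have hγ : 0 < γ := mul_pos (div_pos hn0 hq0) hp0
  have hγeq : γ = (n:ℝ) * (p/q) := by rw [hγdef]; ring
  have hγn : γ < (n:ℝ) := by rw [hγeq]; nlinarith
  have hns : (n:ℝ) - γ = (n:ℝ) * (1 - p/q) := by rw [hγdef]; ring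
  haveI : Nonempty (Fin n) := ⟨⟨0, hn⟩⟩
  haveI : Nontrivial (EuclideanSpace ℝ (Fin n)) := inferInstance
  set H : EuclideanSpace ℝ (Fin n) → ℝ≥0∞ :=
    fun x => ENNReal.ofReal (if ‖x‖ < 1 then ‖x‖ ^ (-γ) else 0) with hHdef
  set Bv : ℝ := (volume (ball (0:EuclideanSpace ℝ (Fin n)) 1)).toReal with hBdef
  have hB : 0 < Bv := ENNReal.toReal_pos
    (measure_ball_pos volume 0 one_pos).ne' measure_ball_lt_top.ne
  -- measurability of f
  have hfmeas : Measurable f := by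
    have hfeq : f = fun x => if x = 0 then f 0 else
        (if 0 < ‖x‖ ∧ ‖x‖ < 1 then ‖x‖ ^ (-((n : ℝ) / q)) else 0) := by
      funext x
      by_cases hx : x = 0
      · simp [hx]
      · rw [hf x hx, if_neg hx]
    rw [hfeq]
    refine Measurable.ite ?_ measurable_const ?_
    · rw [show {x : EuclideanSpace ℝ (Fin n) | x = 0} = {0} from Set.setOf_eq_eq_singleton]
      exact measurableSet_singleton 0
    · refine Measurable.ite ?_ (measurable_norm.pow_const _) measurable_const
      exact (measurableSet_lt measurable_const measurable_norm).inter
        (measurableSet_lt measurable_norm measurable_const)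
  have h0ae : ∀ᵐ x : EuclideanSpace ℝ (Fin n) ∂volume, x ≠ 0 := by
    rw [ae_iff]
    simpa using measure_singleton (0 : EuclideanSpace ℝ (Fin n))
  -- integral to lintegral
  have key0 : ∀ (a : EuclideanSpace ℝ (Fin n)) (r : ℝ),
      ∫ x in ball a r, |f x| ^ p = (∫⁻ x in ball a r, H x).toReal := by
    intro a r
    rw [integral_eq_lintegral_of_nonneg_ae
      (Filter.Eventually.of_forall fun x => Real.rpow_nonneg (abs_nonneg _) _)
      ((hfmeas.abs.pow_const p).aestronglyMeasurable)]
    congr 1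
    refine lintegral_congr_ae (ae_restrict_of_ae ?_)
    filter_upwards [h0ae] with x hx0
    have hx : 0 < ‖x‖ := norm_pos_iff.2 hx0
    rw [hf x hx0, hHdef]
    by_cases h1 : ‖x‖ < 1
    · rw [if_pos ⟨hx, h1⟩]
      simp only [if_pos h1]
      congr 1
      rw [abs_of_nonneg (Real.rpow_nonneg (norm_nonneg x) _),
        ← Real.rpow_mul (norm_nonneg x)]
      congr 1
      rw [hγdef]; ring
    · rw [if_neg (by tauto)]
      simp only [if_neg h1]
      rw [abs_zero, Real.zero_rpow hp0.ne']
  -- value of the model lintegral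
  have hT : ∀ r : ℝ, 0 < r → r < 1 →
      (∫⁻ x in ball (0:EuclideanSpace ℝ (Fin n)) r, H x).toReal =
        Bv * (1 - p/q)⁻¹ * r ^ ((n:ℝ) * (1 - p/q)) := by
    intro r hr0 hr1
    rw [hHdef, ball_lint n hn γ hγ hγn r hr0 hr1.le, ENNReal.toReal_mul, ENNReal.toReal_mul,
      ENNReal.toReal_natCast, ENNReal.toReal_ofReal
        (div_nonneg (Real.rpow_nonneg hr0.le _) (by linarith)), ← hBdef, hns]
    rw [div_eq_mul_inv, mul_inv]
    have hninv : (n:ℝ) * ((n:ℝ))⁻¹ = 1 := mul_inv_cancel₀ hn0.ne'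
    linear_combination (Bv * (1 - p/q)⁻¹ * r ^ ((n:ℝ) * (1 - p/q))) * hninv
  have hLne : ∀ r : ℝ, 0 < r → r < 1 →
      (∫⁻ x in ball (0:EuclideanSpace ℝ (Fin n)) r, H x) ≠ ⊤ := by
    intro r hr0 hr1
    rw [hHdef, ball_lint n hn γ hγ hγn r hr0 hr1.le]
    exact ENNReal.mul_ne_top
      (ENNReal.mul_ne_top (ENNReal.natCast_ne_top n) measure_ball_lt_top.ne)
      ENNReal.ofReal_ne_top
  -- volume of balls
  have hvol : ∀ (a : EuclideanSpace ℝ (Fin n)) (r : ℝ), 0 ≤ r →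
      (volume (ball a r)).toReal = r ^ ((n:ℝ)) * Bv := by
    intro a r hr
    rw [Measure.addHaar_ball (volume : Measure (EuclideanSpace ℝ (Fin n))) a hr,
      ENNReal.toReal_mul, ENNReal.toReal_ofReal (pow_nonneg hr _), ← hBdef,
      finrank_euclideanSpace_fin, Real.rpow_natCast]
  -- the constant value computation
  have hval : ∀ r : ℝ, 0 < r → r < 1 →
      (r ^ ((n:ℝ)) * Bv) ^ (1/q - 1/p) *
        (Bv * (1 - p/q)⁻¹ * r ^ ((n:ℝ) * (1 - p/q))) ^ (1/p) =
      Bv ^ (1/q) * (1 - p/q) ^ (-(1/p)) := by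
    intro r hr0 _
    rw [Real.mul_rpow (Real.rpow_nonneg hr0.le _) hB.le,
      Real.mul_rpow (mul_nonneg hB.le (inv_nonneg.2 hs.le)) (Real.rpow_nonneg hr0.le _),
      Real.mul_rpow hB.le (inv_nonneg.2 hs.le),
      ← Real.rpow_mul hr0.le, ← Real.rpow_mul hr0.le,
      Real.inv_rpow hs.le, ← Real.rpow_neg hs.le]
    have e1 : Bv ^ (1/q - 1/p) * Bv ^ (1/p) = Bv ^ (1/q) := by
      rw [← Real.rpow_add hB]; norm_num
    have e2 : r ^ ((n:ℝ) * (1/q - 1/p)) * r ^ ((n:ℝ) * (1 - p/q) * (1/p)) = 1 := by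
      rw [← Real.rpow_add hr0,
        show (n:ℝ) * (1/q - 1/p) + (n:ℝ) * (1 - p/q) * (1/p) = 0 by field_simp; ring,
        Real.rpow_zero]
    linear_combination (r ^ ((n:ℝ) * (1/q - 1/p)) * r ^ ((n:ℝ) * (1 - p/q) * (1/p)) *
        (1 - p/q) ^ (-(1/p))) * e1 +
      (Bv ^ (1/q) * (1 - p/q) ^ (-(1/p))) * e2
  -- upper bound for every element of the Morrey set
  have hle : ∀ v ∈ smallMorreySet n p q f, v ≤ Bv ^ (1/q) * (1 - p/q) ^ (-(1/p)) := by
    rintro v ⟨a, r, hr0, hr1, rfl⟩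
    have hint : ∫ x in ball a r, |f x| ^ p ≤
        Bv * (1 - p/q)⁻¹ * r ^ ((n:ℝ) * (1 - p/q)) := by
      rw [key0 a r, ← hT r hr0 hr1]
      refine ENNReal.toReal_mono (hLne r hr0 hr1) ?_
      rw [hHdef]
      exact bathtub n hn γ hγ a r hr0 hr1
    have h0le : (0:ℝ) ≤ ∫ x in ball a r, |f x| ^ p := by
      rw [key0 a r]; exact ENNReal.toReal_nonneg
    calc (volume (ball a r)).toReal ^ (1/q - 1/p) * (∫ x in ball a r, |f x| ^ p) ^ (1/p)
        ≤ (volume (ball a r)).toReal ^ (1/q - 1/p) *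
            (Bv * (1 - p/q)⁻¹ * r ^ ((n:ℝ) * (1 - p/q))) ^ (1/p) := by
          refine mul_le_mul_of_nonneg_left ?_ (Real.rpow_nonneg ENNReal.toReal_nonneg _)
          exact Real.rpow_le_rpow h0le hint (by positivity)
      _ = Bv ^ (1/q) * (1 - p/q) ^ (-(1/p)) := by
          rw [hvol a r hr0.le]; exact hval r hr0 hr1
  have hmem : Bv ^ (1/q) * (1 - p/q) ^ (-(1/p)) ∈ smallMorreySet n p q f := by
    refine ⟨0, 1/2, by norm_num, by norm_num, ?_⟩
    rw [key0 0 (1/2), hvol 0 (1/2) (by norm_num), hT (1/2) (by norm_num) (by norm_num),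
      hval (1/2) (by norm_num) (by norm_num)]
  refine ⟨⟨hfmeas, ⟨_, fun v hv => hle v hv⟩⟩, ?_⟩
  exact le_antisymm (csSup_le ⟨_, hmem⟩ hle) (le_csSup ⟨_, fun v hv => hle v hv⟩ hmem)
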